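/- Let K be a convex subset of ℝ^d with nonempty interior and let E be a measurable subset of K with 0 < λ(E) < λ(K). Then for every s ∈ (0,1) there exists a cube W contained in K such that λ(W ∩ E) = s·λ(W). -/

import Mathlib

open MeasureTheory Set

/-- A closed axis-parallel cube in `ℝ^d` with positive side length. -/
def IsCube {d : ℕ} (Q : Set (Fin d → ℝ)) : Prop :=
  ∃ (a : Fin d → ℝ) (r : ℝ), 0 < r ∧ Q = Set.univ.pi fun i => Set.Icc (a i) (a i + r)

/-!
In the sup norm of `Fin d → ℝ` closed balls are cubes, so it suffices to find a ball. A Lebesgue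
density point of `E` in the interior of `K` yields a ball inside `K` in which `E` has density
above `s`, and a density point of `interior K \ E` one in which it has density below `s`.
Moving centre and radius linearly from one ball to the other keeps the ball inside `K` by
convexity, and the measure of its intersection with `E` varies continuously since spheres are
null; the intermediate value theorem then yields a ball of density exactly `s`.
-/

open Metric Filter Topology
open scoped ENNReal NNReal Pointwise

theorem isCube_closedBall {d : ℕ} (x : Fin d → ℝ) {r : ℝ} (hr : 0 < r) :
    IsCube (closedBall x r) := by
  refine ⟨fun i => x i - r, 2 * r, by positivity, ?_⟩
  rw [closedBall_pi _ hr.le]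
  refine pi_congr rfl fun i _ => ?_
  rw [Real.closedBall_eq_Icc]
  ring_nf

variable {V : Type*} [NormedAddCommGroup V] [NormedSpace ℝ V]

theorem Convex.closedBall_combo_subset [ProperSpace V] {K : Set V} (hK : Convex ℝ K)
    {x y : V} {r q a b : ℝ} (hr : 0 ≤ r) (hq : 0 ≤ q) (ha : 0 ≤ a) (hb : 0 ≤ b)
    (hab : a + b = 1) (hx : closedBall x r ⊆ K) (hy : closedBall y q ⊆ K) :
    closedBall (a • x + b • y) (a * r + b * q) ⊆ K := by
  have hsplit : closedBall (a • x + b • y) (a * r + b * q) =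
      a • closedBall x r + b • closedBall y q := by
    rw [smul_closedBall _ _ hr, smul_closedBall _ _ hq, Real.norm_of_nonneg ha,
      Real.norm_of_nonneg hb, closedBall_add_closedBall (by positivity) (by positivity)]
  rw [hsplit]
  exact (add_subset_add (smul_set_mono hx) (smul_set_mono hy)).trans
    (hK.set_combo_subset ha hb hab)

theorem eventually_mem_closedBall_iff {X : Type*} [PseudoMetricSpace X] {x y : X} {r : ℝ}
    (hy : y ∉ sphere x r) :
    ∀ᶠ p : X × ℝ in 𝓝 (x, r), y ∈ closedBall p.1 p.2 ↔ y ∈ closedBall x r := by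
  have hf : Continuous fun p : X × ℝ => dist y p.1 - p.2 :=
    (continuous_const.dist continuous_fst).sub continuous_snd
  simp only [mem_closedBall, mem_sphere] at hy ⊢
  rcases lt_or_gt_of_ne hy with h | h
  · filter_upwards [hf.continuousAt.eventually_lt continuousAt_const (sub_neg.2 h)] with p hp
    simp only [sub_neg] at hp
    exact iff_of_true hp.le h.le
  · filter_upwards [continuousAt_const.eventually_lt hf.continuousAt (sub_pos.2 h)] with p hp
    simp only [sub_pos] at hp
    exact iff_of_false hp.not_ge h.not_ge

variable [FiniteDimensional ℝ V] [MeasurableSpace V] [BorelSpace V]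
  (μ : Measure V) [μ.IsAddHaarMeasure]

theorem continuousAt_measure_closedBall_inter {E : Set V} (hE : MeasurableSet E) {p : V × ℝ}
    (hp : 0 < p.2) : ContinuousAt (fun q : V × ℝ => μ (closedBall q.1 q.2 ∩ E)) p := by
  obtain ⟨x, r⟩ := p
  have hsphere : ∀ᵐ y ∂μ, y ∉ sphere x r :=
    measure_eq_zero_iff_ae_notMem.1 (Measure.addHaar_sphere_of_ne_zero μ x hp.ne')
  have hnear : ∀ᶠ q : V × ℝ in 𝓝 (x, r), q.2 + dist q.1 x ≤ r + 1 := by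
    have hc : Continuous fun q : V × ℝ => q.2 + dist q.1 x :=
      continuous_snd.add (continuous_fst.dist continuous_const)
    exact (hc.continuousAt.eventually_lt continuousAt_const (by simp)).mono fun _ h => h.le
  refine tendsto_measure_of_ae_tendsto_indicator _ (B := closedBall x (r + 1))
    (measurableSet_closedBall.inter hE)
    (fun q => measurableSet_closedBall.inter hE) measurableSet_closedBall
    measure_closedBall_lt_top.ne ?_ ?_
  · exact hnear.mono fun q hq => inter_subset_left.trans (closedBall_subset_closedBall' hq)
  · filter_upwards [hsphere] with y hy
    filter_upwards [eventually_mem_closedBall_iff hy] with q hq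
    simp only [mem_inter_iff, hq]

theorem Convex.exists_closedBall_subset_measure_inter_eq {K E : Set V} (hK : Convex ℝ K)
    (hE : MeasurableSet E) {x₀ x₁ : V} {r₀ r₁ : ℝ} (hr₀ : 0 < r₀) (hr₁ : 0 < r₁)
    (h₀K : closedBall x₀ r₀ ⊆ K) (h₁K : closedBall x₁ r₁ ⊆ K) {c : ℝ≥0}
    (h₀ : μ (closedBall x₀ r₀ ∩ E) ≤ c * μ (closedBall x₀ r₀))
    (h₁ : c * μ (closedBall x₁ r₁) ≤ μ (closedBall x₁ r₁ ∩ E)) :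
    ∃ x r, 0 < r ∧ closedBall x r ⊆ K ∧
      μ (closedBall x r ∩ E) = c * μ (closedBall x r) := by
  set center : ℝ → V := fun t => (1 - t) • x₀ + t • x₁
  set radius : ℝ → ℝ := fun t => (1 - t) * r₀ + t * r₁
  have hradius : ∀ t ∈ Icc (0 : ℝ) 1, 0 < radius t := fun t ht => by
    rcases ht.1.eq_or_lt with rfl | ht0
    · simpa [radius] using hr₀
    · exact add_pos_of_nonneg_of_pos (mul_nonneg (by linarith [ht.2]) hr₀.le) (mul_pos ht0 hr₁)
  have hpath : Continuous fun t => (center t, radius t) := by fun_prop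
  have hcont : ∀ F : Set V, MeasurableSet F →
      ContinuousOn (fun t => μ (closedBall (center t) (radius t) ∩ F)) (Icc 0 1) :=
    fun F hF t ht => ((continuousAt_measure_closedBall_inter μ hF (hradius t ht)).comp
      hpath.continuousAt).continuousWithinAt
  have hball : ContinuousOn (fun t => c * μ (closedBall (center t) (radius t))) (Icc 0 1) := by
    simpa only [inter_univ, Function.comp_def] using
      (ENNReal.continuous_const_mul ENNReal.coe_ne_top).comp_continuousOn
        (hcont univ MeasurableSet.univ)
  obtain ⟨t, ht, heq⟩ := isPreconnected_Icc.intermediate_value₂ (left_mem_Icc.2 zero_le_one)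
    (right_mem_Icc.2 zero_le_one) (hcont E hE) hball (by simpa [center, radius] using h₀)
    (by simpa [center, radius] using h₁)
  exact ⟨center t, radius t, hradius t ht, hK.closedBall_combo_subset hr₀.le hr₁.le
    (by linarith [ht.2]) ht.1 (by ring) h₀K h₁K, heq⟩

theorem exists_closedBall_subset_density_mem {E A U : Set V} (hE : MeasurableSet E)
    (hU : IsOpen U) (hA : μ (A ∩ U) ≠ 0) {S : Set ℝ≥0∞}
    (hS : ∀ x ∈ A, S ∈ 𝓝 (E.indicator 1 x)) :
    ∃ x r, 0 < r ∧ closedBall x r ⊆ U ∧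
      μ (E ∩ closedBall x r) / μ (closedBall x r) ∈ S := by
  obtain ⟨x, ⟨hxA, hxU⟩, hx⟩ := Measure.exists_mem_of_measure_ne_zero_of_ae hA
    (ae_restrict_of_ae (Besicovitch.ae_tendsto_measure_inter_div_of_measurableSet μ hE))
  obtain ⟨r, ⟨hrS, hrU⟩, hr⟩ := ((hx.eventually (hS x hxA)).and (nhdsWithin_le_nhds
    (eventually_closedBall_subset (hU.mem_nhds hxU))) |>.and self_mem_nhdsWithin).exists
  exact ⟨x, r, hr, hrU, hrS⟩

theorem exists_closedBall_subset_lt_measure_inter {E U : Set V} (hE : MeasurableSet E)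
    (hU : IsOpen U) (hEU : μ (E ∩ U) ≠ 0) {c : ℝ≥0∞} (hc : c < 1) :
    ∃ x r, 0 < r ∧ closedBall x r ⊆ U ∧
      c * μ (closedBall x r) < μ (closedBall x r ∩ E) := by
  obtain ⟨x, r, hr, hrU, hdens⟩ := exists_closedBall_subset_density_mem μ hE hU hEU
    (S := Ioi c) fun x hx => by rw [indicator_of_mem hx, Pi.one_apply]; exact Ioi_mem_nhds hc
  refine ⟨x, r, hr, hrU, ?_⟩
  rwa [inter_comm, ← ENNReal.lt_div_iff_mul_lt (Or.inl (measure_closedBall_pos μ x hr).ne')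
    (Or.inl measure_closedBall_lt_top.ne)]

theorem exists_closedBall_subset_measure_inter_lt {E U : Set V} (hE : MeasurableSet E)
    (hU : IsOpen U) (hEU : μ (U \ E) ≠ 0) {c : ℝ≥0∞} (hc : 0 < c) :
    ∃ x r, 0 < r ∧ closedBall x r ⊆ U ∧
      μ (closedBall x r ∩ E) < c * μ (closedBall x r) := by
  obtain ⟨x, r, hr, hrU, hdens⟩ := exists_closedBall_subset_density_mem μ hE hU (A := Eᶜ)
    (by rwa [inter_comm]) (S := Iio c)
    fun x hx => by rw [indicator_of_notMem hx]; exact Iio_mem_nhds hc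
  refine ⟨x, r, hr, hrU, ?_⟩
  rwa [mem_Iio, inter_comm, ENNReal.div_lt_iff (Or.inl (measure_closedBall_pos μ x hr).ne')
    (Or.inl measure_closedBall_lt_top.ne)] at hdens

theorem stmt16 {d : ℕ} (K : Set (Fin d → ℝ)) (hK : Convex ℝ K)
    (E : Set (Fin d → ℝ)) (hE : MeasurableSet E) (hEK : E ⊆ K)
    (h1 : 0 < volume E) (h2 : volume E < volume K)
    (s : ℝ) (hs : s ∈ Set.Ioo (0:ℝ) 1) :
    ∃ W : Set (Fin d → ℝ), IsCube W ∧ W ⊆ K ∧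
      volume (W ∩ E) = ENNReal.ofReal s * volume W := by
  have hint : interior K =ᵐ[volume] K :=
    interior_ae_eq_of_null_frontier (hK.addHaar_frontier volume)
  have hEint : volume (E ∩ interior K) ≠ 0 := by
    rw [measure_congr ((EventuallyEq.refl _ E).inter hint), inter_eq_left.2 hEK]
    exact h1.ne'
  have hintE : volume (interior K \ E) ≠ 0 :=
    ((tsub_pos_of_lt h2).trans_le (measure_congr hint ▸ le_measure_sdiff)).ne'
  obtain ⟨x₀, r₀, hr₀, h₀K, h₀⟩ := exists_closedBall_subset_measure_inter_lt volume hE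
    isOpen_interior hintE (ENNReal.ofReal_pos.2 hs.1)
  obtain ⟨x₁, r₁, hr₁, h₁K, h₁⟩ := exists_closedBall_subset_lt_measure_inter volume hE
    isOpen_interior hEint (ENNReal.ofReal_lt_one.2 hs.2)
  obtain ⟨x, r, hr, hrK, heq⟩ := hK.exists_closedBall_subset_measure_inter_eq volume hE
    hr₀ hr₁ (h₀K.trans interior_subset) (h₁K.trans interior_subset) (c := s.toNNReal)
    h₀.le h₁.le
  exact ⟨closedBall x r, isCube_closedBall x hr, hrK, heq⟩
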